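/- Let S be a powerful set over a finite set E. Then S is linear (i.e., S is closed under symmetric difference) if and only if its rank function is subcardinal: r_S(X) ≤ |X| for every X ⊆ E. -/

import Mathlib

/-!
Identify subsets of `E` with vectors of `𝔽₂^E` and let `ŝ(V) = ∑_{Y ∈ S} (-1)^{|V ∩ Y|}` be the
Walsh transform of `S`. If `S` is linear, the fibres of `Y ↦ Y ∩ X` are cosets of
`{Y ∈ S | Y ∩ X = ∅}`, so `|S|` is at most that count times `2^{|X|}`.

Conversely, `∑_{V ⊆ X} ŝ(V) = 2^{|X|} · |{Y ∈ S | Y ∩ X = ∅}|`, and subcardinality together with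
powerfulness makes this a multiple of `|S|`. By induction on `X`, each `ŝ(V)` is then a multiple
of `|S|` lying in `(-|S|, |S|]`, i.e. `0` or `|S|`. So `ŝ` is supported on the `V` on which every
character `(-1)^{|V ∩ Y|}`, `Y ∈ S`, is trivial, and Fourier inversion gives
`[A Δ B ∈ S] = [∅ ∈ S] = 1` for `A, B ∈ S`.
-/

open Finset

/-- A family `S` of subsets of a finite set `E` is *powerful* if every member of `S`
is a subset of `E` and, for every `X ⊆ E`, the number of members of `S` that are
subsets of `X` is a power of 2. -/
def Powerful {α : Type*} [DecidableEq α] (E : Finset α) (S : Finset (Finset α)) : Prop :=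
  (∀ Y ∈ S, Y ⊆ E) ∧ ∀ X ⊆ E, ∃ k : ℕ, (S.filter (fun Y => Y ⊆ X)).card = 2 ^ k

section Walsh

variable {α : Type*} [DecidableEq α]

def walshChar (V Y : Finset α) : ℤ := (-1) ^ #(V ∩ Y)

lemma walshChar_eq_prod (V Y : Finset α) :
    walshChar V Y = ∏ i ∈ V, if i ∈ Y then -1 else 1 := by
  rw [walshChar, prod_ite_mem, prod_const]

lemma walshChar_eq_one_or_eq_neg_one (V Y : Finset α) :
    walshChar V Y = 1 ∨ walshChar V Y = -1 :=
  neg_one_pow_eq_or ℤ _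

lemma walshChar_le_one (V Y : Finset α) : walshChar V Y ≤ 1 :=
  (walshChar_eq_one_or_eq_neg_one V Y).elim (·.le) (by omega)

lemma neg_one_le_walshChar (V Y : Finset α) : -1 ≤ walshChar V Y :=
  (walshChar_eq_one_or_eq_neg_one V Y).elim (by omega) (·.ge)

lemma walshChar_empty (V : Finset α) : walshChar V ∅ = 1 := by
  simp [walshChar]

lemma walshChar_symmDiff (V A B : Finset α) :
    walshChar V (symmDiff A B) = walshChar V A * walshChar V B := by
  simp only [walshChar_eq_prod, ← prod_mul_distrib, mem_symmDiff]
  refine prod_congr rfl fun i _ => ?_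
  by_cases hA : i ∈ A <;> by_cases hB : i ∈ B <;> simp [hA, hB]

lemma sum_powerset_walshChar (X Y : Finset α) :
    ∑ V ∈ X.powerset, walshChar V Y = if Y ∩ X = ∅ then 2 ^ #X else 0 := by
  have h (i : α) : 1 + (if i ∈ Y then -1 else 1 : ℤ) = if i ∉ Y then 2 else 0 := by
    split_ifs <;> simp_all
  simp only [walshChar_eq_prod, ← prod_one_add, h, prod_ite_zero, prod_const,
    ← disjoint_iff_inter_eq_empty, disjoint_right]

def walsh (S : Finset (Finset α)) (V : Finset α) : ℤ := ∑ Y ∈ S, walshChar V Y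

lemma sum_powerset_walsh (S : Finset (Finset α)) (X : Finset α) :
    ∑ V ∈ X.powerset, walsh S V = 2 ^ #X * #{Y ∈ S | Y ∩ X = ∅} := by
  simp only [walsh]
  rw [sum_comm]
  simp only [sum_powerset_walshChar, sum_ite, sum_const_zero, add_zero, sum_const, nsmul_eq_mul]
  ring

lemma walsh_le_card (S : Finset (Finset α)) (V : Finset α) : walsh S V ≤ #S := by
  calc walsh S V ≤ ∑ _Y ∈ S, 1 := sum_le_sum fun Y _ => walshChar_le_one V Y
    _ = #S := by simp

variable {S : Finset (Finset α)}

lemma neg_card_lt_walsh (h : ∅ ∈ S) (V : Finset α) : -#S < walsh S V := by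
  calc -(#S : ℤ) = ∑ _Y ∈ S, -1 := by simp
    _ < walsh S V :=
      sum_lt_sum (fun Y _ => neg_one_le_walshChar V Y) ⟨∅, h, by simp [walshChar_empty]⟩

lemma walshChar_eq_one_of_walsh_eq_card {V Y : Finset α} (h : walsh S V = #S) (hY : Y ∈ S) :
    walshChar V Y = 1 := by
  refine (walshChar_eq_one_or_eq_neg_one V Y).resolve_right fun hneg => ?_
  have : walsh S V < ∑ _Y ∈ S, 1 :=
    sum_lt_sum (fun Z _ => walshChar_le_one V Z) ⟨Y, hY, by omega⟩
  simp [h] at this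

lemma sum_powerset_walsh_mul_walshChar {E C : Finset α} (hSE : ∀ Y ∈ S, Y ⊆ E) (hC : C ⊆ E) :
    ∑ V ∈ E.powerset, walsh S V * walshChar V C = if C ∈ S then 2 ^ #E else 0 := by
  have h (Y) (hY : Y ∈ S) : ∑ V ∈ E.powerset, walshChar V Y * walshChar V C =
      if Y = C then 2 ^ #E else 0 := by
    have hYC : symmDiff Y C ⊆ E := symmDiff_le_sup.trans (union_subset (hSE Y hY) hC)
    simp only [← walshChar_symmDiff, sum_powerset_walshChar, inter_eq_left.2 hYC,
      ← bot_eq_empty, symmDiff_eq_bot]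
  simp only [walsh, sum_mul]
  rw [sum_comm, sum_congr rfl h, sum_ite_eq']

lemma walsh_eq_zero_or_eq_card {E : Finset α} (hempty : ∅ ∈ S)
    (hdvd : ∀ V ⊆ E, #S ∣ 2 ^ #V * #{Y ∈ S | Y ∩ V = ∅}) :
    ∀ V ⊆ E, walsh S V = 0 ∨ walsh S V = #S := by
  intro V
  induction V using Finset.strongInduction with
  | H V ih =>
    intro hV
    have hall : (#S : ℤ) ∣ ∑ W ∈ V.powerset, walsh S W := by
      rw [sum_powerset_walsh]
      exact_mod_cast hdvd V hV
    have hproper : (#S : ℤ) ∣ ∑ W ∈ V.powerset.erase V, walsh S W := by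
      refine dvd_sum fun W hW => ?_
      have hWV : W ⊂ V := ssubset_of_ne_of_subset (ne_of_mem_erase hW)
        (mem_powerset.1 (mem_of_mem_erase hW))
      rcases ih W hWV (hWV.subset.trans hV) with h | h <;> simp [h]
    rw [← add_sum_erase _ _ (mem_powerset_self V), dvd_add_left hproper] at hall
    obtain ⟨t, ht⟩ := hall
    have hpos : (0 : ℤ) < #S := by exact_mod_cast card_pos.2 ⟨∅, hempty⟩
    have hle := walsh_le_card S V
    have hlt := neg_card_lt_walsh hempty V
    have ht1 : t ≤ 1 := le_of_mul_le_mul_left (by linarith) hpos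
    have ht0 : -1 < t := lt_of_mul_lt_mul_left (by linarith) hpos.le
    interval_cases t <;> simp [ht]

lemma card_le_card_filter_inter_eq_empty_mul_two_pow
    (hlin : ∀ A ∈ S, ∀ B ∈ S, symmDiff A B ∈ S) (X : Finset α) :
    #S ≤ #{Y ∈ S | Y ∩ X = ∅} * 2 ^ #X := by
  rw [← card_powerset]
  refine card_le_mul_card_image_of_maps_to (f := (· ∩ X))
    (fun Y _ => mem_powerset.2 inter_subset_right) _ fun Z _ => ?_
  obtain hZ | ⟨Y₀, hY₀⟩ := (filter (fun Y => Y ∩ X = Z) S).eq_empty_or_nonempty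
  · simp [hZ]
  rw [mem_filter] at hY₀
  refine card_le_card_of_injOn (symmDiff · Y₀) (fun Y hY => ?_)
    fun Y _ Y' _ h => symmDiff_left_injective Y₀ h
  obtain ⟨hYS, hYX⟩ := mem_filter.1 (mem_coe.1 hY)
  refine mem_coe.2 (mem_filter.2 ⟨hlin Y hYS Y₀ hY₀.1, ?_⟩)
  rw [show symmDiff Y Y₀ ∩ X = symmDiff (Y ∩ X) (Y₀ ∩ X) from inf_symmDiff_distrib_right _ _ _,
    hYX, hY₀.2, symmDiff_self, bot_eq_empty]

lemma symmDiff_mem_of_walsh_eq_zero_or_eq_card {E A B : Finset α} (hSE : ∀ Y ∈ S, Y ⊆ E)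
    (hempty : ∅ ∈ S) (hw : ∀ V ⊆ E, walsh S V = 0 ∨ walsh S V = #S) (hA : A ∈ S) (hB : B ∈ S) :
    symmDiff A B ∈ S := by
  have hAB : symmDiff A B ⊆ E := symmDiff_le_sup.trans (union_subset (hSE A hA) (hSE B hB))
  have hchar : ∀ V ∈ E.powerset,
      walsh S V * walshChar V (symmDiff A B) = walsh S V * walshChar V ∅ := by
    intro V hV
    rcases hw V (mem_powerset.1 hV) with h | h
    · simp [h]
    · rw [walshChar_symmDiff, walshChar_eq_one_of_walsh_eq_card h hA,
        walshChar_eq_one_of_walsh_eq_card h hB, walshChar_empty, mul_one]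
  have := sum_congr rfl hchar
  rw [sum_powerset_walsh_mul_walshChar hSE hAB,
    sum_powerset_walsh_mul_walshChar hSE (empty_subset E), if_pos hempty] at this
  by_contra hn
  rw [if_neg hn] at this
  exact absurd this.symm (by positivity)

end Walsh

namespace Powerful

variable {α : Type*} [DecidableEq α] {E : Finset α} {S : Finset (Finset α)}

lemma empty_mem (hS : Powerful E S) : ∅ ∈ S := by
  obtain ⟨k, hk⟩ := hS.2 ∅ (empty_subset E)
  obtain ⟨Y, hY⟩ := card_pos.1 (hk ▸ Nat.two_pow_pos k)
  rw [mem_filter, subset_empty] at hY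
  exact hY.2 ▸ hY.1

lemma exists_card_filter_inter_eq_empty (hS : Powerful E S) (X : Finset α) :
    ∃ a, #{Y ∈ S | Y ∩ X = ∅} = 2 ^ a := by
  obtain ⟨a, ha⟩ := hS.2 (E \ X) sdiff_subset
  refine ⟨a, ha ▸ congrArg card (filter_congr fun Y hY => ?_)⟩
  rw [subset_sdiff, ← disjoint_iff_inter_eq_empty]
  exact (and_iff_right (hS.1 Y hY)).symm

lemma card_dvd_two_pow_mul_card_filter_inter_eq_empty (hS : Powerful E S)
    (hsub : ∀ X ⊆ E, ∀ k : ℕ, #{Y ∈ S | Y ∩ X = ∅} * 2 ^ k = #S → k ≤ #X)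
    {V : Finset α} (hV : V ⊆ E) : #S ∣ 2 ^ #V * #{Y ∈ S | Y ∩ V = ∅} := by
  obtain ⟨a, ha⟩ := hS.exists_card_filter_inter_eq_empty V
  obtain ⟨q, hq⟩ := hS.exists_card_filter_inter_eq_empty ∅
  simp only [inter_empty, filter_true] at hq
  have haq : a ≤ q := (Nat.pow_le_pow_iff_right one_lt_two).1 (ha ▸ hq ▸ card_filter_le S _)
  have hrank := hsub V hV (q - a) (by rw [ha, ← pow_add, Nat.add_sub_cancel' haq, hq])
  rw [ha, hq, ← pow_add]
  exact pow_dvd_pow 2 (by omega)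

end Powerful

/-- A powerful set `S` over `E` is linear (closed under symmetric difference) iff
its rank function is subcardinal: `r_S(X) ≤ |X|` for all `X ⊆ E`, where `r_S(X)` is
the unique `k` with `|{Y ∈ S : Y ∩ X = ∅}| · 2^k = |S|`. -/
theorem linear_iff_subcardinal {α : Type*} [DecidableEq α]
    (E : Finset α) (S : Finset (Finset α)) (hS : Powerful E S) :
    (∀ X ∈ S, ∀ Y ∈ S, symmDiff X Y ∈ S) ↔
      (∀ X ⊆ E, ∀ k : ℕ,
        (S.filter (fun Y => Y ∩ X = ∅)).card * 2 ^ k = S.card → k ≤ X.card) := by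
  have hempty := hS.empty_mem
  constructor
  · intro hlin X _ k hk
    have hK : 0 < #{Y ∈ S | Y ∩ X = ∅} := card_pos.2 ⟨∅, by simp [hempty]⟩
    have hbound := card_le_card_filter_inter_eq_empty_mul_two_pow hlin X
    rw [← hk] at hbound
    exact (Nat.pow_le_pow_iff_right one_lt_two).1 (Nat.le_of_mul_le_mul_left hbound hK)
  · intro hsub A hA B hB
    have hw := walsh_eq_zero_or_eq_card hempty fun V hV =>
      hS.card_dvd_two_pow_mul_card_filter_inter_eq_empty hsub hV
    exact symmDiff_mem_of_walsh_eq_zero_or_eq_card hS.1 hempty hw hA hB
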